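/- Let E be a graph with |G(E)| > 2. Then G(E) is congruence-free if and only if E has exactly one strongly connected component and every vertex of E has out-degree at least 2. -/

import Mathlib

universe u

/-- A directed graph: vertices, edges, source and range maps. -/
structure DGraph : Type (u + 1) where
  V : Type u
  Ed : Type u
  src : Ed → V
  rng : Ed → V

/-- The end vertex of a list of edges started at `v` (ignoring composability). -/
def DGraph.ranAux (G : DGraph) : G.V → List G.Ed → G.V
  | v, [] => v
  | _, e :: es => DGraph.ranAux G (G.rng e) es

/-- The edges `l` form a composable path starting at `v`. -/
def DGraph.Chain (G : DGraph) : G.V → List G.Ed → Prop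
  | _, [] => True
  | v, e :: es => G.src e = v ∧ DGraph.Chain G (G.rng e) es

theorem DGraph.ranAux_append (G : DGraph) (v : G.V) (l1 l2 : List G.Ed) :
    G.ranAux v (l1 ++ l2) = G.ranAux (G.ranAux v l1) l2 := by
  induction l1 generalizing v with
  | nil => rfl
  | cons e es ih => exact ih (G.rng e)

theorem DGraph.chain_append (G : DGraph) {v : G.V} {l1 l2 : List G.Ed}
    (h1 : G.Chain v l1) (h2 : G.Chain (G.ranAux v l1) l2) : G.Chain v (l1 ++ l2) := by
  induction l1 generalizing v with
  | nil => exact h2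
  | cons e es ih => exact ⟨h1.1, ih h1.2 h2⟩

theorem DGraph.chain_append_right (G : DGraph) {v : G.V} {l1 l2 : List G.Ed}
    (h : G.Chain v (l1 ++ l2)) : G.Chain (G.ranAux v l1) l2 := by
  induction l1 generalizing v with
  | nil => exact h
  | cons e es ih => exact ih h.2

/-- A (finite, directed) path in the graph `G`: a start vertex together
with a composable list of edges. Vertices are the paths of length `0`. -/
structure GPath (G : DGraph.{u}) : Type u where
  start : G.V
  edges : List G.Ed
  chain : G.Chain start edges

namespace GPath

variable {G : DGraph}

/-- The range (end vertex) of a path. -/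
def ran (p : GPath G) : G.V := G.ranAux p.start p.edges

/-- The path of length zero at a vertex. -/
def ofVertex (G : DGraph) (v : G.V) : GPath G := ⟨v, [], trivial⟩

/-- The path of length one given by an edge. -/
def ofEdge (G : DGraph) (e : G.Ed) : GPath G := ⟨G.src e, [e], ⟨rfl, trivial⟩⟩

@[simp] theorem ofVertex_ran (G : DGraph) (v : G.V) : (ofVertex G v).ran = v := rfl

@[simp] theorem ofEdge_ran (G : DGraph) (e : G.Ed) : (ofEdge G e).ran = G.rng e := rfl

/-- Concatenation of composable paths. -/
def append (p q : GPath G) (h : p.ran = q.start) : GPath G :=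
  ⟨p.start, p.edges ++ q.edges,
    G.chain_append p.chain (by
      show G.Chain (G.ranAux p.start p.edges) q.edges
      have : G.ranAux p.start p.edges = q.start := h
      rw [this]; exact q.chain)⟩

@[simp] theorem append_ran (p q : GPath G) (h : p.ran = q.start) :
    (p.append q h).ran = q.ran := by
  show G.ranAux p.start (p.edges ++ q.edges) = q.ran
  rw [G.ranAux_append]
  have : G.ranAux p.start p.edges = q.start := h
  rw [this]; rfl

/-- `y` is an initial segment of the path `p`. -/
def IsPrefixOf (y p : GPath G) : Prop := y.start = p.start ∧ y.edges <+: p.edges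

/-- The remainder `t` of `p` after its initial segment `y`, so that `p = y ++ t`. -/
def remainder (y p : GPath G) (h : y.IsPrefixOf p) : GPath G :=
  ⟨y.ran, p.edges.drop y.edges.length, by
    obtain ⟨l2, hl⟩ := h.2
    rw [← hl, List.drop_left]
    show G.Chain (G.ranAux y.start y.edges) l2
    rw [h.1]
    exact G.chain_append_right (v := p.start) (l1 := y.edges) (l2 := l2)
      (by rw [hl]; exact p.chain)⟩

@[simp] theorem remainder_ran (y p : GPath G) (h : y.IsPrefixOf p) :
    (y.remainder p h).ran = p.ran := by
  obtain ⟨l2, hl⟩ := h.2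
  show G.ranAux y.ran (p.edges.drop y.edges.length) = p.ran
  rw [← hl, List.drop_left]
  show G.ranAux (G.ranAux y.start y.edges) l2 = p.ran
  rw [h.1, ← G.ranAux_append, hl]
  rfl

end GPath

/-- The graph inverse semigroup of `G` (in normal form): its elements are zero together
with the elements `x * y⁻¹` for paths `x`, `y` with the same range. -/
inductive GIS (G : DGraph.{u}) : Type u where
  | zero : GIS G
  | mk (x y : GPath G) (h : x.ran = y.ran) : GIS G

instance (G : DGraph) : Zero (GIS G) := ⟨GIS.zero⟩

open scoped Classical in
/-- Multiplication in the graph inverse semigroup. -/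
noncomputable def GIS.gmul {G : DGraph} : GIS G → GIS G → GIS G
  | GIS.zero, _ => GIS.zero
  | GIS.mk _ _ _, GIS.zero => GIS.zero
  | GIS.mk x y hxy, GIS.mk p q hpq =>
    if h1 : y.IsPrefixOf p then
      GIS.mk (x.append (y.remainder p h1) hxy) q
        (by exact (GPath.append_ran _ _ _).trans ((GPath.remainder_ran _ _ _).trans hpq))
    else if h2 : p.IsPrefixOf y then
      GIS.mk x (q.append (p.remainder y h2) hpq.symm)
        (by exact hxy.trans ((GPath.append_ran _ _ _).trans (GPath.remainder_ran _ _ _)).symm)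
    else GIS.zero

noncomputable instance (G : DGraph) : Mul (GIS G) := ⟨GIS.gmul⟩

/-- The element of `GIS G` corresponding to a vertex `v` (i.e. `v = v * v⁻¹`). -/
def vertexEl (G : DGraph) (v : G.V) : GIS G :=
  GIS.mk (GPath.ofVertex G v) (GPath.ofVertex G v) rfl

/-- The element of `GIS G` corresponding to an edge `e` (i.e. `e = e * r(e)⁻¹`). -/
def edgeEl (G : DGraph) (e : G.Ed) : GIS G :=
  GIS.mk (GPath.ofEdge G e) (GPath.ofVertex G (G.rng e)) rfl

/-- The inverse operation on `GIS G`: `(x y⁻¹)⁻¹ = y x⁻¹`. -/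
def GIS.inv {G : DGraph} : GIS G → GIS G
  | GIS.zero => GIS.zero
  | GIS.mk x y h => GIS.mk y x h.symm

/-- `a` lies in the principal left ideal generated by `b` (`S¹a ⊆ S¹b`). -/
def GreenLeL {G : DGraph} (a b : GIS G) : Prop := a = b ∨ ∃ c, a = c * b

/-- `a` lies in the principal right ideal generated by `b` (`aS¹ ⊆ bS¹`). -/
def GreenLeR {G : DGraph} (a b : GIS G) : Prop := a = b ∨ ∃ c, a = b * c

/-- `a` lies in the principal two-sided ideal generated by `b` (`S¹aS¹ ⊆ S¹bS¹`). -/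
def GreenLeJ {G : DGraph} (a b : GIS G) : Prop :=
  a = b ∨ (∃ c, a = c * b) ∨ (∃ c, a = b * c) ∨ (∃ c d, a = c * b * d)

/-- Green's `L`-relation. -/
def GreenEqL {G : DGraph} (a b : GIS G) : Prop := GreenLeL a b ∧ GreenLeL b a

/-- Green's `R`-relation. -/
def GreenEqR {G : DGraph} (a b : GIS G) : Prop := GreenLeR a b ∧ GreenLeR b a

/-- Green's `J`-relation. -/
def GreenEqJ {G : DGraph} (a b : GIS G) : Prop := GreenLeJ a b ∧ GreenLeJ b a

/-- There is a (possibly trivial) directed path from `v` to `w` in `G`. -/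
def GConnected (G : DGraph) (v w : G.V) : Prop := ∃ t : GPath G, t.start = v ∧ t.ran = w

/-- `I` is a (two-sided) ideal of `GIS G`. -/
def GISIdeal {G : DGraph} (I : Set (GIS G)) : Prop :=
  ∀ a ∈ I, ∀ c : GIS G, a * c ∈ I ∧ c * a ∈ I

/-- `R` is the Rees congruence of some ideal `I`, i.e. `R = (I × I) ∪ Δ`. -/
def IsReesCon {G : DGraph} (R : Con (GIS G)) : Prop :=
  ∃ I : Set (GIS G), GISIdeal I ∧ ∀ a b : GIS G, R a b ↔ (a ∈ I ∧ b ∈ I) ∨ a = b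

/-- The only congruences on `GIS G` are the universal one and the diagonal. -/
def CongFree (G : DGraph) : Prop :=
  ∀ R : Con (GIS G), (∀ a b : GIS G, R a b) ∨ (∀ a b : GIS G, R a b ↔ a = b)

/-- The natural partial order on the inverse semigroup `GIS G`:
`a ≤ b` iff `a = ε * b` for some idempotent `ε`. -/
def natLe {G : DGraph} (a b : GIS G) : Prop := ∃ ε : GIS G, ε * ε = ε ∧ a = ε * b

/-- The graph obtained from `G` by deleting the vertices in `S` and all
edges incident to them. -/
def DGraph.delete (G : DGraph) (S : Set G.V) : DGraph where
  V := {v : G.V // v ∉ S}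
  Ed := {e : G.Ed // G.src e ∉ S ∧ G.rng e ∉ S}
  src e := ⟨G.src e.1, e.2.1⟩
  rng e := ⟨G.rng e.1, e.2.2⟩

/-- The graph with a single vertex and `n` loops; its graph inverse semigroup
is the polycyclic monoid `Pₙ`. -/
def polyGraph (n : ℕ) : DGraph :=
  ⟨PUnit, Fin n, fun _ => PUnit.unit, fun _ => PUnit.unit⟩


/-!
`GIS G` acts on the finite paths of `G` by partial maps, `x y⁻¹` sending `y t` to `x t`, and
the product of `GIS G` is composition of these maps, so kernels of the action are congruences.
Restricted to the paths ending at vertices not reachable from `v`, the kernel identifies the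
vertex `v` with `0` but no unreachable vertex with `0`. If `e` is the only edge out of `v`,
the relation "same action on all long paths" identifies `v` with `e e⁻¹`, and is not universal
since a cycle through `e` gives arbitrarily long paths from `v`. If no edge leaves `v`, strong
connectivity leaves only the elements `0` and `v`.

Conversely, let `x y⁻¹ ≠ p q⁻¹` be related, with `|x| ≤ |p|`. Then `x⁻¹ (x y⁻¹) y` is the
vertex `u = r(y)` while `x⁻¹ (p q⁻¹) y` is not, as their actions on the trivial path at `u`
show. Conjugating both by an edge `g` out of `u` that is not the first edge of the paths of
the latter relates the vertex `r(g)` to `0`, and by strong connectivity every element lies in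
the ideal generated by any nonzero element.
-/

theorem List.append_prefix_iff_of_prefix {α : Type*} {q r l : List α} (hq : q <+: l) :
    q ++ r <+: l ↔ r <+: l.drop q.length := by
  conv_lhs => rw [List.prefix_append_drop hq]
  exact List.prefix_append_right_inj q

namespace GPath

variable {G : DGraph}

theorem ext {p q : GPath G} (hs : p.start = q.start) (he : p.edges = q.edges) : p = q := by
  cases p; cases q; cases hs; cases he; rfl

@[simp] theorem append_edges (p q : GPath G) (h : p.ran = q.start) :
    (p.append q h).edges = p.edges ++ q.edges := rfl

@[simp] theorem ofVertex_edges (v : G.V) : (ofVertex G v).edges = [] := rfl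

@[simp] theorem ofEdge_start (e : G.Ed) : (ofEdge G e).start = G.src e := rfl

@[simp] theorem ofEdge_edges (e : G.Ed) : (ofEdge G e).edges = [e] := rfl

theorem isPrefixOf_iff {y p : GPath G} :
    y.IsPrefixOf p ↔ y.start = p.start ∧ y.edges <+: p.edges := Iff.rfl

theorem isPrefixOf_refl (p : GPath G) : p.IsPrefixOf p := ⟨rfl, List.prefix_refl _⟩

theorem IsPrefixOf.trans {x y z : GPath G} (h₁ : x.IsPrefixOf y) (h₂ : y.IsPrefixOf z) :
    x.IsPrefixOf z := ⟨h₁.1.trans h₂.1, h₁.2.trans h₂.2⟩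

theorem isPrefixOf_append (p q : GPath G) (h : p.ran = q.start) :
    p.IsPrefixOf (p.append q h) := ⟨rfl, List.prefix_append _ _⟩

theorem ofVertex_isPrefixOf_iff {v : G.V} {p : GPath G} :
    (ofVertex G v).IsPrefixOf p ↔ v = p.start :=
  ⟨And.left, fun h => ⟨h, List.nil_prefix⟩⟩

theorem append_remainder {y p : GPath G} (h : y.IsPrefixOf p) :
    y.append (y.remainder p h) rfl = p :=
  ext h.1 (List.prefix_append_drop h.2).symm

theorem ran_eq_start_of_edges_eq_nil {p : GPath G} (h : p.edges = []) : p.ran = p.start := by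
  rw [ran, h]; rfl

theorem src_eq_start_of_edges_eq_cons {p : GPath G} {e : G.Ed} {l : List G.Ed}
    (h : p.edges = e :: l) : G.src e = p.start := by
  have hc := p.chain
  rw [h] at hc
  exact hc.1

theorem exists_long_of_ran_eq_start {c : GPath G} (hc : c.ran = c.start) (hne : c.edges ≠ [])
    (n : ℕ) : ∃ w : GPath G, w.start = c.start ∧ w.ran = c.start ∧ n ≤ w.edges.length := by
  induction n with
  | zero => exact ⟨ofVertex G c.start, rfl, rfl, le_rfl⟩
  | succ n ih =>
    obtain ⟨w, hws, hwr, hwn⟩ := ih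
    refine ⟨w.append c hwr, hws, (append_ran _ _ _).trans hc, ?_⟩
    have := List.length_pos_iff.2 hne
    simp only [append_edges, List.length_append]
    omega

theorem eq_ofVertex_of_forall_src_ne {v : G.V} (hconn : ∀ w : G.V, GConnected G v w)
    (hv : ∀ e : G.Ed, G.src e ≠ v) (p : GPath G) : p = ofVertex G v := by
  have edges_nil : ∀ q : GPath G, q.start = v → q.edges = [] := by
    intro q hq
    cases h : q.edges with
    | nil => rfl
    | cons e l => exact absurd ((src_eq_start_of_edges_eq_cons h).trans hq) (hv e)
  obtain ⟨t, hts, htr⟩ := hconn p.start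
  have hps : p.start = v := by
    rw [← htr, ran_eq_start_of_edges_eq_nil (edges_nil t hts), hts]
  exact ext hps (edges_nil p hps)

end GPath

namespace GIS

variable {G : DGraph}

theorem mul_def (a b : GIS G) : a * b = gmul a b := rfl

@[simp] theorem zero_mul (a : GIS G) : 0 * a = 0 := rfl

@[simp] theorem mul_zero (a : GIS G) : a * 0 = 0 := by cases a <;> rfl

theorem mk_ne_zero {x y : GPath G} (h : x.ran = y.ran) : mk x y h ≠ 0 := nofun

theorem nonempty_vertex_of_ne {a b : GIS G} (hab : a ≠ b) : Nonempty G.V := by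
  cases a with
  | mk x _ _ => exact ⟨x.start⟩
  | zero =>
    cases b with
    | mk x _ _ => exact ⟨x.start⟩
    | zero => exact absurd rfl hab

theorem eq_zero_or_eq_vertexEl {v : G.V} (hpaths : ∀ p : GPath G, p = GPath.ofVertex G v)
    (a : GIS G) : a = 0 ∨ a = vertexEl G v := by
  cases a with
  | zero => exact Or.inl rfl
  | mk x y h =>
    obtain rfl := hpaths x
    obtain rfl := hpaths y
    exact Or.inr rfl

theorem mk_mul_mk_of_isPrefixOf {x y p q X : GPath G} {hxy : x.ran = y.ran}
    {hpq : p.ran = q.ran} {hX : X.ran = q.ran} (hyp : y.IsPrefixOf p) (hXs : X.start = x.start)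
    (hXe : X.edges = x.edges ++ p.edges.drop y.edges.length) :
    mk x y hxy * mk p q hpq = mk X q hX := by
  rw [mul_def, gmul, dif_pos hyp]
  congr 1
  exact GPath.ext hXs.symm hXe.symm

def ofPath (p : GPath G) : GIS G := mk p (GPath.ofVertex G p.ran) rfl

theorem edgeEl_inv_mul_vertexEl_mul_edgeEl (g : G.Ed) :
    (edgeEl G g).inv * (vertexEl G (G.src g) * edgeEl G g) = vertexEl G (G.rng g) := by
  have h : vertexEl G (G.src g) * edgeEl G g = edgeEl G g :=
    mk_mul_mk_of_isPrefixOf (GPath.ofVertex_isPrefixOf_iff.2 rfl) rfl rfl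
  rw [h]
  exact mk_mul_mk_of_isPrefixOf (GPath.isPrefixOf_refl _) rfl rfl

theorem ofPath_inv_mul_mk_mul_ofPath {x y : GPath G} (h : x.ran = y.ran) :
    (ofPath x).inv * (mk x y h * ofPath y) = vertexEl G y.ran := by
  have h₁ : mk x y h * ofPath y = mk x (GPath.ofVertex G y.ran) h :=
    mk_mul_mk_of_isPrefixOf (GPath.isPrefixOf_refl _) rfl (by simp)
  rw [h₁]
  exact mk_mul_mk_of_isPrefixOf (GPath.isPrefixOf_refl _) h.symm (by simp)

theorem con_univ_of_rel_zero (R : Con (GIS G)) {x y : GPath G} {hxy : x.ran = y.ran}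
    (hconn : ∀ w : G.V, GConnected G x.ran w) (h : R (mk x y hxy) 0) (a b : GIS G) :
    R a b := by
  suffices ∀ c, R c 0 from R.trans (this a) (R.symm (this b))
  intro c
  cases c with
  | zero => exact R.refl 0
  | mk p q hpq =>
    obtain ⟨t, hts, htr⟩ := hconn p.ran
    have hxt : (x.append t hts.symm).ran = p.ran := (GPath.append_ran _ _ _).trans htr
    have hyt : (y.append t (hxy.symm.trans hts.symm)).ran = p.ran :=
      (GPath.append_ran _ _ _).trans htr
    have h₁ : mk x y hxy * mk (y.append t _) q (hyt.trans hpq)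
        = mk (x.append t hts.symm) q (hxt.trans hpq) :=
      mk_mul_mk_of_isPrefixOf (GPath.isPrefixOf_append _ _ _) rfl (by simp)
    have h₂ : mk p (x.append t hts.symm) hxt.symm * mk (x.append t hts.symm) q (hxt.trans hpq)
        = mk p q hpq :=
      mk_mul_mk_of_isPrefixOf (GPath.isPrefixOf_refl _) rfl (by simp)
    have := R.mul (R.refl (mk p (x.append t hts.symm) hxt.symm))
      (R.mul h (R.refl (mk (y.append t _) q (hyt.trans hpq))))
    rwa [h₁, h₂, zero_mul, mul_zero] at this

open scoped Classical in
noncomputable def act : GIS G → GPath G → Option (GPath G)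
  | zero, _ => none
  | mk x y h, z => if hz : y.IsPrefixOf z then some (x.append (y.remainder z hz) h) else none

theorem act_mk_of_isPrefixOf {x y z : GPath G} (h : x.ran = y.ran) (hz : y.IsPrefixOf z) :
    act (mk x y h) z = some (x.append (y.remainder z hz) h) := dif_pos hz

theorem act_mk_of_not_isPrefixOf {x y z : GPath G} (h : x.ran = y.ran)
    (hz : ¬ y.IsPrefixOf z) : act (mk x y h) z = none := dif_neg hz

theorem act_mk_eq_some {x y z w : GPath G} {h : x.ran = y.ran}
    (hw : act (mk x y h) z = some w) :
    y.IsPrefixOf z ∧ w.start = x.start ∧ w.edges = x.edges ++ z.edges.drop y.edges.length := by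
  by_cases hz : y.IsPrefixOf z
  · rw [act_mk_of_isPrefixOf h hz, Option.some_inj] at hw
    subst hw
    exact ⟨hz, rfl, rfl⟩
  · rw [act_mk_of_not_isPrefixOf h hz] at hw
    cases hw

theorem act_mk_remainder_left_eq_bind {x y p q : GPath G} {hxy : x.ran = y.ran}
    {hpq : p.ran = q.ran} (h₁ : y.IsPrefixOf p) (z : GPath G) (h) :
    act (mk (x.append (y.remainder p h₁) hxy) q h) z
      = (act (mk p q hpq) z).bind (act (mk x y hxy)) := by
  by_cases hq : q.IsPrefixOf z
  · have hy : y.IsPrefixOf (p.append (q.remainder z hq) hpq) :=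
      h₁.trans (GPath.isPrefixOf_append _ _ _)
    rw [act_mk_of_isPrefixOf h hq, act_mk_of_isPrefixOf hpq hq, Option.bind_some,
      act_mk_of_isPrefixOf hxy hy, Option.some_inj]
    refine GPath.ext rfl ?_
    simp [GPath.append, GPath.remainder, List.drop_append_of_le_length h₁.2.length_le]
  · rw [act_mk_of_not_isPrefixOf _ hq, act_mk_of_not_isPrefixOf hpq hq, Option.bind_none]

theorem act_mk_remainder_right_eq_bind {x y p q : GPath G} {hxy : x.ran = y.ran}
    {hpq : p.ran = q.ran} (h₂ : p.IsPrefixOf y) (z : GPath G) (h) :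
    act (mk x (q.append (p.remainder y h₂) hpq.symm) h) z
      = (act (mk p q hpq) z).bind (act (mk x y hxy)) := by
  obtain ⟨r, hr⟩ := h₂.2
  have key : ∀ hq : q.IsPrefixOf z,
      (q.append (p.remainder y h₂) hpq.symm).IsPrefixOf z
        ↔ y.IsPrefixOf (p.append (q.remainder z hq) hpq) := by
    intro hq
    -- `simp` cannot rewrite under `GPath.append` here: its proof argument only typechecks after
    -- unfolding `GPath.remainder`
    delta GPath.append GPath.remainder
    simp only [GPath.isPrefixOf_iff, ← hr, List.drop_left, List.prefix_append_right_inj,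
      List.append_prefix_iff_of_prefix hq.2, hq.1, h₂.1]
  by_cases hq : q.IsPrefixOf z
  · rw [act_mk_of_isPrefixOf hpq hq, Option.bind_some]
    by_cases hy : y.IsPrefixOf (p.append (q.remainder z hq) hpq)
    · rw [act_mk_of_isPrefixOf h ((key hq).2 hy), act_mk_of_isPrefixOf hxy hy, Option.some_inj]
      refine GPath.ext rfl ?_
      delta GPath.append GPath.remainder
      simp [← hr, List.drop_drop, List.drop_append]
    · rw [act_mk_of_not_isPrefixOf h (mt (key hq).1 hy), act_mk_of_not_isPrefixOf hxy hy]
  · rw [act_mk_of_not_isPrefixOf hpq hq, Option.bind_none,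
      act_mk_of_not_isPrefixOf h (fun h' => hq ((GPath.isPrefixOf_append _ _ _).trans h'))]

theorem bind_act_mk_eq_none_of_incomparable {x y p q : GPath G} {hxy : x.ran = y.ran}
    {hpq : p.ran = q.ran} (h₁ : ¬ y.IsPrefixOf p) (h₂ : ¬ p.IsPrefixOf y) (z : GPath G) :
    (act (mk p q hpq) z).bind (act (mk x y hxy)) = none := by
  by_cases hq : q.IsPrefixOf z
  · rw [act_mk_of_isPrefixOf hpq hq, Option.bind_some]
    refine act_mk_of_not_isPrefixOf hxy fun hy => ?_
    have hp := GPath.isPrefixOf_append p (q.remainder z hq) hpq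
    rcases List.prefix_or_prefix_of_prefix hy.2 hp.2 with h | h
    · exact h₁ ⟨hy.1, h⟩
    · exact h₂ ⟨hy.1.symm, h⟩
  · rw [act_mk_of_not_isPrefixOf hpq hq, Option.bind_none]

theorem act_mul (a b : GIS G) (z : GPath G) : act (a * b) z = (act b z).bind (act a) := by
  cases a with
  | zero => cases act b z <;> rfl
  | mk x y hxy =>
    cases b with
    | zero => rfl
    | mk p q hpq =>
      rw [mul_def, gmul]
      split_ifs with h₁ h₂
      · exact act_mk_remainder_left_eq_bind h₁ z _
      · exact act_mk_remainder_right_eq_bind h₂ z _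
      · exact (bind_act_mk_eq_none_of_incomparable h₁ h₂ z).symm

theorem ran_eq_of_act_eq_some {a : GIS G} {z w : GPath G} (hw : act a z = some w) :
    w.ran = z.ran := by
  cases a with
  | zero => cases hw
  | mk x y h =>
    by_cases hz : y.IsPrefixOf z
    · rw [act_mk_of_isPrefixOf h hz, Option.some_inj] at hw
      subst hw
      exact (GPath.append_ran _ _ _).trans (GPath.remainder_ran _ _ _)
    · rw [act_mk_of_not_isPrefixOf h hz] at hw
      cases hw

theorem exists_length_le_act (a : GIS G) :
    ∃ k, ∀ z w, act a z = some w → z.edges.length ≤ w.edges.length + k := by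
  cases a with
  | zero => exact ⟨0, fun _ _ hw => by cases hw⟩
  | mk x y h =>
    refine ⟨y.edges.length, fun z w hw => ?_⟩
    rw [(act_mk_eq_some hw).2.2, List.length_append, List.length_drop]
    omega

theorem eq_zero_of_act_eq_none {a : GIS G} (ha : ∀ z, act a z = none) : a = 0 := by
  cases a with
  | zero => rfl
  | mk x y h =>
    have := ha y
    rw [act_mk_of_isPrefixOf h (GPath.isPrefixOf_refl y)] at this
    cases this

theorem act_mk_self_of_isPrefixOf {y z : GPath G} (hz : y.IsPrefixOf z) :
    act (mk y y rfl) z = some z := by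
  rw [act_mk_of_isPrefixOf rfl hz, GPath.append_remainder]

theorem act_vertexEl_of_start_eq {v : G.V} {z : GPath G} (hz : z.start = v) :
    act (vertexEl G v) z = some z :=
  act_mk_self_of_isPrefixOf (GPath.ofVertex_isPrefixOf_iff.2 hz.symm)

theorem act_vertexEl_of_start_ne {v : G.V} {z : GPath G} (hz : z.start ≠ v) :
    act (vertexEl G v) z = none :=
  act_mk_of_not_isPrefixOf rfl fun h => hz (GPath.ofVertex_isPrefixOf_iff.1 h).symm

theorem act_ofPath_ofVertex (p : GPath G) : act (ofPath p) (GPath.ofVertex G p.ran) = some p :=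
  (act_mk_of_isPrefixOf (x := p) (y := GPath.ofVertex G p.ran) rfl
    (GPath.isPrefixOf_refl _)).trans (congrArg some (GPath.ext rfl (List.append_nil p.edges)))

def actKerOn (S : Set G.V) : Con (GIS G) where
  r a b := ∀ z : GPath G, z.ran ∈ S → act a z = act b z
  iseqv := ⟨fun _ _ _ => rfl, fun h z hz => (h z hz).symm,
    fun h₁ h₂ z hz => (h₁ z hz).trans (h₂ z hz)⟩
  mul' {a b c d} hab hcd z hz := by
    rw [act_mul, act_mul, hcd z hz]
    cases hw : act d z with
    | none => rfl
    | some w => exact hab w (ran_eq_of_act_eq_some hw ▸ hz)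

/-- In effect, the kernel of the action on infinite paths. -/
def actKerAtInfinity : Con (GIS G) where
  r a b := ∃ n, ∀ z : GPath G, n ≤ z.edges.length → act a z = act b z
  iseqv := ⟨fun _ => ⟨0, fun _ _ => rfl⟩, fun ⟨n, h⟩ => ⟨n, fun z hz => (h z hz).symm⟩,
    fun ⟨n, h⟩ ⟨m, h'⟩ => ⟨max n m, fun z hz =>
      (h z (le_of_max_le_left hz)).trans (h' z (le_of_max_le_right hz))⟩⟩
  mul' {a b c d} := by
    rintro ⟨n, hab⟩ ⟨m, hcd⟩
    obtain ⟨k, hk⟩ := exists_length_le_act d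
    refine ⟨max m (n + k), fun z hz => ?_⟩
    rw [act_mul, act_mul, hcd z (le_of_max_le_left hz)]
    cases hw : act d z with
    | none => rfl
    | some w => exact hab w (by have := hk z w hw; omega)

theorem connected_of_congFree (hCF : CongFree G) (v w : G.V) : GConnected G v w := by
  by_contra hvw
  rcases hCF (actKerOn {u | ¬ GConnected G v u}) with huniv | hdiag
  · have h := huniv (vertexEl G w) 0 (GPath.ofVertex G w) hvw
    rw [act_vertexEl_of_start_eq (v := w) (z := GPath.ofVertex G w) rfl] at h
    cases h
  · refine mk_ne_zero rfl ((hdiag (vertexEl G v) 0).1 fun z hz => ?_)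
    exact act_vertexEl_of_start_ne fun hs => hz ⟨z, hs, rfl⟩

theorem not_congFree_of_unique_edge {e : G.Ed} (hcyc : GConnected G (G.rng e) (G.src e))
    (he : ∀ f : G.Ed, G.src f = G.src e → f = e) : ¬ CongFree G := by
  intro hCF
  rcases hCF actKerAtInfinity with huniv | hdiag
  · obtain ⟨t, hts, htr⟩ := hcyc
    obtain ⟨n, hn⟩ := huniv (vertexEl G (G.src e)) 0
    obtain ⟨w, hws, -, hwn⟩ := GPath.exists_long_of_ran_eq_start
      (c := (GPath.ofEdge G e).append t hts.symm) ((GPath.append_ran _ _ _).trans htr) nofun n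
    have := hn w hwn
    rw [act_vertexEl_of_start_eq (v := G.src e) hws] at this
    cases this
  · have hiff : ∀ z : GPath G, 1 ≤ z.edges.length →
        ((GPath.ofVertex G (G.src e)).IsPrefixOf z ↔ (GPath.ofEdge G e).IsPrefixOf z) := by
      intro z hz
      refine ⟨fun h => ⟨h.1, ?_⟩, fun h => ⟨h.1, List.nil_prefix⟩⟩
      obtain ⟨f, l, hfl⟩ := List.exists_cons_of_length_pos hz
      rw [hfl, he f ((GPath.src_eq_start_of_edges_eq_cons hfl).trans h.1.symm)]
      exact List.cons_prefix_cons.2 ⟨rfl, List.nil_prefix⟩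
    have hrel : actKerAtInfinity (vertexEl G (G.src e))
        (mk (GPath.ofEdge G e) (GPath.ofEdge G e) rfl) := by
      refine ⟨1, fun z hz => ?_⟩
      by_cases h : (GPath.ofEdge G e).IsPrefixOf z
      · rw [act_mk_self_of_isPrefixOf h, vertexEl, act_mk_self_of_isPrefixOf ((hiff z hz).2 h)]
      · rw [act_mk_of_not_isPrefixOf rfl h, vertexEl,
          act_mk_of_not_isPrefixOf rfl (mt (hiff z hz).1 h)]
    have := congrArg GPath.edges (mk.inj ((hdiag _ _).1 hrel)).1
    cases this

theorem exists_two_edges_of_congFree (hCF : CongFree G)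
    (hcard : ∃ a b c : GIS G, a ≠ b ∧ a ≠ c ∧ b ≠ c) (v : G.V) :
    ∃ e f : G.Ed, e ≠ f ∧ G.src e = v ∧ G.src f = v := by
  have hconn := connected_of_congFree hCF
  by_contra hv
  by_cases h : ∃ e : G.Ed, G.src e = v
  · obtain ⟨e, rfl⟩ := h
    refine not_congFree_of_unique_edge (e := e) (hconn _ _) (fun f hf => ?_) hCF
    by_contra hfe
    exact hv ⟨f, e, hfe, hf, rfl⟩
  · have h01 := eq_zero_or_eq_vertexEl
      (GPath.eq_ofVertex_of_forall_src_ne (hconn v) fun e he => h ⟨e, he⟩)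
    obtain ⟨a, b, c, hab, hac, hbc⟩ := hcard
    rcases h01 a with rfl | rfl <;> rcases h01 b with rfl | rfl <;>
      rcases h01 c with rfl | rfl <;> contradiction

theorem ofPath_inv_mul_mk_mul_ofPath_ne {x y p q : GPath G} {hxy : x.ran = y.ran}
    {hpq : p.ran = q.ran} (hle : x.edges.length ≤ p.edges.length)
    (hne : mk x y hxy ≠ mk p q hpq) :
    (ofPath x).inv * (mk p q hpq * ofPath y) ≠ vertexEl G y.ran := by
  intro hd
  have h := congrArg (act · (GPath.ofVertex G y.ran)) hd
  simp only [act_mul, act_ofPath_ofVertex, Option.bind_some,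
    act_vertexEl_of_start_eq (v := y.ran) (z := GPath.ofVertex G y.ran) rfl,
    Option.bind_eq_some_iff] at h
  obtain ⟨m, hm, hx⟩ := h
  obtain ⟨hqy, hms, hme⟩ := act_mk_eq_some hm
  obtain ⟨hxm, -, hnil⟩ := act_mk_eq_some hx
  have hmx : m.edges.length ≤ x.edges.length := by
    simpa [eq_comm (a := []), List.drop_eq_nil_iff] using hnil
  have hdrop : y.edges.drop q.edges.length = [] := by
    rw [← List.length_eq_zero_iff]
    have := congrArg List.length hme
    simp only [List.length_append] at this
    omega
  have hxp : x.edges = p.edges := by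
    rw [hdrop, List.append_nil] at hme
    rw [← hme]
    exact hxm.2.eq_of_length (le_antisymm hxm.2.length_le hmx)
  have hqy' : q.edges = y.edges :=
    hqy.2.eq_of_length (by have := hqy.2.length_le; simp [List.drop_eq_nil_iff] at hdrop; omega)
  obtain rfl : x = p := GPath.ext (hxm.1.trans hms) hxp
  obtain rfl : y = q := GPath.ext hqy.1.symm hqy'.symm
  exact hne rfl

theorem exists_edge_src_eq_ne {u : G.V} (hu : ∃ e f : G.Ed, e ≠ f ∧ G.src e = u ∧ G.src f = u)
    (o : Option G.Ed) : ∃ g : G.Ed, G.src g = u ∧ o ≠ some g := by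
  obtain ⟨e₁, e₂, hne, h₁, h₂⟩ := hu
  by_cases h : o = some e₁
  · exact ⟨e₂, h₂, by rw [h, Ne, Option.some_inj]; exact hne⟩
  · exact ⟨e₁, h₁, h⟩

theorem exists_edgeEl_inv_mul_mul_edgeEl_eq_zero {u : G.V}
    (hu : ∃ e f : G.Ed, e ≠ f ∧ G.src e = u ∧ G.src f = u) {d : GIS G}
    (hd : d ≠ vertexEl G u) :
    ∃ g : G.Ed, G.src g = u ∧ (edgeEl G g).inv * (d * edgeEl G g) = 0 := by
  cases d with
  | zero =>
    obtain ⟨g, hg, -⟩ := exists_edge_src_eq_ne hu none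
    exact ⟨g, hg, mul_zero _⟩
  | mk Z W hZW =>
    obtain ⟨g, hg, hhead⟩ := exists_edge_src_eq_ne hu (Z.edges ++ W.edges).head?
    refine ⟨g, hg, eq_zero_of_act_eq_none fun z => Option.eq_none_iff_forall_ne_some.2 ?_⟩
    intro m hm
    simp only [act_mul, Option.bind_eq_some_iff] at hm
    obtain ⟨m₂, ⟨m₁, h₁, h₂⟩, h₃⟩ := hm
    obtain ⟨-, hm₁s, hm₁e⟩ := act_mk_eq_some h₁
    obtain ⟨hWm, hm₂s, hm₂e⟩ := act_mk_eq_some h₂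
    obtain ⟨⟨hgs, hgm⟩, -⟩ := act_mk_eq_some h₃
    simp only [GPath.ofEdge_edges, GPath.ofEdge_start, GPath.ofVertex_edges, List.length_nil,
      List.drop_zero, List.singleton_append] at hm₁s hm₁e hgs hgm
    cases hZ : Z.edges with
    | cons f l =>
      rw [hm₂e, hZ, List.cons_append] at hgm
      obtain rfl := (List.cons_prefix_cons.1 hgm).1
      exact hhead (by simp [hZ])
    | nil =>
      cases hW : W.edges with
      | cons f l =>
        have hfg := hWm.2
        rw [hW, hm₁e] at hfg
        obtain rfl := (List.cons_prefix_cons.1 hfg).1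
        exact hhead (by simp [hZ, hW])
      | nil =>
        obtain rfl : Z = GPath.ofVertex G u :=
          GPath.ext (hm₂s.symm.trans (hgs.symm.trans hg)) hZ
        obtain rfl : W = GPath.ofVertex G u := GPath.ext (hWm.1.trans (hm₁s.trans hg)) hW
        exact hd rfl

theorem con_univ_of_rel_mk_of_ne (hconn : ∀ v w : G.V, GConnected G v w)
    (hdeg : ∀ v : G.V, ∃ e f : G.Ed, e ≠ f ∧ G.src e = v ∧ G.src f = v) (R : Con (GIS G))
    {x y p q : GPath G} {hxy : x.ran = y.ran} {hpq : p.ran = q.ran}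
    (hR : R (mk x y hxy) (mk p q hpq)) (hne : mk x y hxy ≠ mk p q hpq) (a b : GIS G) :
    R a b := by
  wlog hle : x.edges.length ≤ p.edges.length generalizing x y p q
  · exact this (R.symm hR) hne.symm (by omega)
  obtain ⟨g, hg, hzero⟩ :=
    exists_edgeEl_inv_mul_mul_edgeEl_eq_zero (hdeg _) (ofPath_inv_mul_mk_mul_ofPath_ne hle hne)
  have hconj := R.mul (R.refl (ofPath x).inv) (R.mul hR (R.refl (ofPath y)))
  rw [ofPath_inv_mul_mk_mul_ofPath, ← hg] at hconj
  have hedge := R.mul (R.refl (edgeEl G g).inv) (R.mul hconj (R.refl (edgeEl G g)))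
  rw [edgeEl_inv_mul_vertexEl_mul_edgeEl, hzero] at hedge
  exact con_univ_of_rel_zero R (hconn _) hedge a b

theorem congFree_of_connected (hconn : ∀ v w : G.V, GConnected G v w)
    (hdeg : ∀ v : G.V, ∃ e f : G.Ed, e ≠ f ∧ G.src e = v ∧ G.src f = v) : CongFree G := by
  intro R
  by_cases hdiag : ∀ a b, R a b → a = b
  · exact Or.inr fun a b => ⟨hdiag a b, fun h => h ▸ R.refl a⟩
  push Not at hdiag
  obtain ⟨a, b, hab, hne⟩ := hdiag
  refine Or.inl ?_
  cases a with
  | zero =>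
    cases b with
    | zero => exact absurd rfl hne
    | mk p q hpq => exact con_univ_of_rel_zero R (hconn _) (R.symm hab)
  | mk x y hxy =>
    cases b with
    | zero => exact con_univ_of_rel_zero R (hconn _) hab
    | mk p q hpq => exact con_univ_of_rel_mk_of_ne hconn hdeg R hab hne

end GIS

/-- If `|G(E)| > 2`, then `G(E)` is congruence-free iff `E` has exactly
one strongly connected component (i.e. `E` has a vertex and all vertices are mutually
reachable) and every vertex of `E` has out-degree at least `2`. -/
theorem stmt15 (G : DGraph) (hcard : ∃ a b c : GIS G, a ≠ b ∧ a ≠ c ∧ b ≠ c) :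
    CongFree G ↔
      ((Nonempty G.V ∧ ∀ v w : G.V, GConnected G v w) ∧
        ∀ v : G.V, ∃ e f : G.Ed, e ≠ f ∧ G.src e = v ∧ G.src f = v) := by
  obtain ⟨a, b, -, hab, -, -⟩ := id hcard
  exact ⟨fun hCF => ⟨⟨GIS.nonempty_vertex_of_ne hab, GIS.connected_of_congFree hCF⟩,
      GIS.exists_two_edges_of_congFree hCF hcard⟩,
    fun ⟨⟨_, hconn⟩, hdeg⟩ => GIS.congFree_of_connected hconn hdeg⟩
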